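/- arXiv:0808.2822 — 3 statements merged into one kernel-verified Lean document; each statement's English description precedes it below -/
import Mathlib

section
/- Every non-crossing permutation σ of {1,…,n} has as many descents as its inverse: des(σ) = des(σ^{−1}). -/
open scoped Classical

namespace Stmt

/-- Number of inversions of a permutation of `{1,…,n}`. -/
def invP {n : ℕ} (σ : Equiv.Perm (Fin n)) : ℕ :=
  (Finset.univ.filter (fun p : Fin n × Fin n => p.1 < p.2 ∧ σ p.2 < σ p.1)).card

/-- Descent set of a permutation, as 1-indexed positions in `{1,…,n-1}`. -/
def permDes {n : ℕ} (σ : Equiv.Perm (Fin n)) : Finset ℕ :=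
  (Finset.Ico 1 n).filter (fun i =>
    ∃ h : i < n, σ ⟨i, h⟩ < σ ⟨i - 1, Nat.lt_of_le_of_lt (Nat.sub_le i 1) h⟩)

def desP {n : ℕ} (σ : Equiv.Perm (Fin n)) : ℕ := (permDes σ).card

def majP {n : ℕ} (σ : Equiv.Perm (Fin n)) : ℕ := ∑ i ∈ permDes σ, i

def imajP {n : ℕ} (σ : Equiv.Perm (Fin n)) : ℕ := majP σ⁻¹

/-- Every orbit of `σ` is an increasing cycle: each element is mapped to the
next larger element of its orbit, the largest being mapped to the smallest. -/
def IncCycles {n : ℕ} (σ : Equiv.Perm (Fin n)) : Prop :=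
  ∀ x : Fin n,
    ((∃ y, σ.SameCycle x y ∧ x < y) →
      x < σ x ∧ ∀ y, σ.SameCycle x y → x < y → σ x ≤ y) ∧
    ((∀ y, σ.SameCycle x y → y ≤ x) → ∀ y, σ.SameCycle x y → σ x ≤ y)

/-- No two distinct orbits of `σ` cross. -/
def NoCrossing {n : ℕ} (σ : Equiv.Perm (Fin n)) : Prop :=
  ¬ ∃ a b c d : Fin n, a < b ∧ b < c ∧ c < d ∧
      σ.SameCycle a c ∧ σ.SameCycle b d ∧ ¬σ.SameCycle a b

/-- Non-crossing permutations of `{1,…,n}`. -/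
def IsNC {n : ℕ} (σ : Equiv.Perm (Fin n)) : Prop := IncCycles σ ∧ NoCrossing σ

/-!
A descent of `σ` is a covering pair of positions `x ⋖ y` with `σ y < σ x`, so a descent of `σ⁻¹`
is a covering pair of values. For non-crossing `σ` an explicit matching injects the descents of `σ`
into those of `σ⁻¹`: every way it could fail produces a crossing. Reading `σ⁻¹` backwards,
`i ↦ rev (σ⁻¹ (rev i))`, turns its decreasing cycles into increasing ones, so it is again
non-crossing, and reversal preserves descent numbers; the injection for it gives the opposite
inequality.
-/

open Equiv Finset

variable {n : ℕ}

section IncCycles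

variable {σ : Perm (Fin n)} {x y : Fin n}

theorem IncCycles.lt_apply (hσ : IncCycles σ) (hxy : σ.SameCycle x y) (h : x < y) : x < σ x :=
  ((hσ x).1 ⟨y, hxy, h⟩).1

theorem IncCycles.apply_le (hσ : IncCycles σ) (hxy : σ.SameCycle x y) (h : x < y) : σ x ≤ y :=
  ((hσ x).1 ⟨y, hxy, h⟩).2 y hxy h

theorem IncCycles.le_of_apply_lt (hσ : IncCycles σ) (hx : σ x < x) (hxy : σ.SameCycle x y) :
    y ≤ x :=
  not_lt.1 fun h => (hσ.lt_apply hxy h).not_gt hx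

theorem IncCycles.apply_le_of_apply_lt (hσ : IncCycles σ) (hx : σ x < x)
    (hxy : σ.SameCycle x y) : σ x ≤ y :=
  (hσ x).2 (fun _ h => hσ.le_of_apply_lt hx h) y hxy

theorem IncCycles.inv_apply_lt (hσ : IncCycles σ) (hxy : σ.SameCycle x y) (h : y < x) :
    σ⁻¹ x < x := by
  have hx : σ (σ⁻¹ x) = x := σ.apply_symm_apply x
  refine lt_of_not_ge fun hle => hle.eq_or_lt.elim (fun hfix => ?_) (fun hlt => ?_)
  · exact h.ne (hxy.eq_of_left (Perm.inv_eq_iff_eq.1 hfix.symm).symm).symm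
  · have hzy : σ.SameCycle (σ⁻¹ x) y := Perm.sameCycle_symm_apply_left.2 hxy
    exact h.not_ge (hx ▸ hσ.apply_le_of_apply_lt (hx.symm ▸ hlt) hzy)

theorem IncCycles.le_inv_apply (hσ : IncCycles σ) (hxy : σ.SameCycle x y) (h : y < x) :
    y ≤ σ⁻¹ x :=
  not_lt.1 fun hlt => h.not_ge <|
    σ.apply_symm_apply x ▸ hσ.apply_le (Perm.sameCycle_symm_apply_left.2 hxy) hlt

theorem IncCycles.le_inv_apply_of_forall_le (hσ : IncCycles σ)
    (hx : ∀ y, σ.SameCycle x y → x ≤ y) (hxy : σ.SameCycle x y) : y ≤ σ⁻¹ x := by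
  have hz : σ (σ⁻¹ x) = x := σ.apply_symm_apply x
  have hzy : σ.SameCycle (σ⁻¹ x) y := Perm.sameCycle_symm_apply_left.2 hxy
  rcases lt_or_ge x (σ⁻¹ x) with hlt | hle
  · exact hσ.le_of_apply_lt (hz.symm ▸ hlt) hzy
  · have hfix : σ⁻¹ x = x := hle.antisymm (hx _ (Perm.sameCycle_symm_apply_right.2 (.refl σ x)))
    rw [hfix, ← hxy.eq_of_left (Perm.inv_eq_iff_eq.1 hfix).symm]

end IncCycles

section Reversal

variable {σ : Perm (Fin n)}

theorem conj_revPerm_apply (π : Perm (Fin n)) (x : Fin n) :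
    (Fin.revPerm * π * Fin.revPerm⁻¹ : Perm (Fin n)) x = (π x.rev).rev :=
  rfl

theorem sameCycle_conj_revPerm_inv {x y : Fin n} :
    (Fin.revPerm * σ⁻¹ * Fin.revPerm⁻¹).SameCycle x y ↔ σ.SameCycle x.rev y.rev := by
  rw [Perm.sameCycle_conj, Perm.sameCycle_inv]
  rfl

theorem IncCycles.conj_revPerm_inv (hσ : IncCycles σ) :
    IncCycles (Fin.revPerm * σ⁻¹ * Fin.revPerm⁻¹) := by
  intro x
  obtain ⟨x, rfl⟩ := Fin.rev_surjective x
  simp only [conj_revPerm_apply, Fin.rev_rev, Fin.rev_lt_rev]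
  refine ⟨fun ⟨y, hxy, hy⟩ => ⟨?_, fun y hxy' hy' => ?_⟩, fun hx y hxy => ?_⟩
  · rw [sameCycle_conj_revPerm_inv, Fin.rev_rev] at hxy
    exact hσ.inv_apply_lt hxy (Fin.rev_lt_iff.1 hy)
  · rw [sameCycle_conj_revPerm_inv, Fin.rev_rev] at hxy'
    exact Fin.rev_le_iff.2 (hσ.le_inv_apply hxy' (Fin.rev_lt_iff.1 hy'))
  · rw [sameCycle_conj_revPerm_inv, Fin.rev_rev] at hxy
    refine Fin.rev_le_iff.2 (hσ.le_inv_apply_of_forall_le (fun z hz => ?_) hxy)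
    exact Fin.rev_le_rev.1
      (hx z.rev (by rwa [sameCycle_conj_revPerm_inv, Fin.rev_rev, Fin.rev_rev]))

theorem NoCrossing.conj_revPerm_inv (hσ : NoCrossing σ) :
    NoCrossing (Fin.revPerm * σ⁻¹ * Fin.revPerm⁻¹) := by
  rintro ⟨a, b, c, d, hab, hbc, hcd, hac, hbd, hnab⟩
  simp only [sameCycle_conj_revPerm_inv] at hac hbd hnab
  exact hσ ⟨d.rev, c.rev, b.rev, a.rev, Fin.rev_lt_rev.2 hcd, Fin.rev_lt_rev.2 hbc,
    Fin.rev_lt_rev.2 hab, hbd.symm, hac.symm, fun h => hnab (hac.trans (h.symm.trans hbd.symm))⟩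

theorem IsNC.conj_revPerm_inv (hσ : IsNC σ) : IsNC (Fin.revPerm * σ⁻¹ * Fin.revPerm⁻¹) :=
  ⟨hσ.1.conj_revPerm_inv, hσ.2.conj_revPerm_inv⟩

end Reversal

section Descents

variable {π : Perm (Fin n)} {p : Fin n × Fin n}

noncomputable def descentPairs (π : Perm (Fin n)) : Finset (Fin n × Fin n) :=
  {p | p.1 ⋖ p.2 ∧ π p.2 < π p.1}

theorem mem_descentPairs : p ∈ descentPairs π ↔ p.1 ⋖ p.2 ∧ π p.2 < π p.1 := by
  simp [descentPairs]

theorem desP_eq_card_descentPairs (π : Perm (Fin n)) : desP π = #(descentPairs π) := by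
  refine (card_bij (fun p _ => (p.2 : ℕ)) (fun p hp => ?_) (fun p hp q hq hpq => ?_)
    (fun i hi => ?_)).symm
  · obtain ⟨hcov, hdes⟩ := mem_descentPairs.1 hp
    have hval : (p.1 : ℕ) + 1 = p.2 := by simpa using hcov
    have hp1 : (⟨p.2 - 1, by omega⟩ : Fin n) = p.1 := Fin.ext (by simp; omega)
    simp only [permDes, mem_filter, mem_Ico]
    exact ⟨⟨by omega, p.2.2⟩, p.2.2, by rwa [hp1]⟩
  · obtain ⟨hpcov, -⟩ := mem_descentPairs.1 hp
    obtain ⟨hqcov, -⟩ := mem_descentPairs.1 hq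
    have h2 : p.2 = q.2 := Fin.ext hpq
    exact Prod.ext (hpcov.unique_left (h2 ▸ hqcov)) h2
  · simp only [permDes, mem_filter, mem_Ico] at hi
    obtain ⟨⟨hi1, hin⟩, _, hdes⟩ := hi
    refine ⟨(⟨i - 1, by omega⟩, ⟨i, hin⟩), mem_descentPairs.2 ⟨?_, hdes⟩, rfl⟩
    simp only [Fin.covBy_iff, Nat.covBy_iff_add_one_eq]
    omega

theorem desP_conj_revPerm (π : Perm (Fin n)) :
    desP (Fin.revPerm * π * Fin.revPerm⁻¹) = desP π := by
  rw [desP_eq_card_descentPairs, desP_eq_card_descentPairs]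
  refine card_equiv ((Equiv.prodComm _ _).trans (Fin.revPerm.prodCongr Fin.revPerm)) fun p => ?_
  simp only [mem_descentPairs, conj_revPerm_apply, Equiv.trans_apply, Equiv.prodComm_apply,
    Equiv.prodCongr_apply, Prod.map, Prod.fst_swap, Prod.snd_swap, Fin.revPerm_apply,
    Fin.rev_lt_rev, Fin.covBy_iff, Nat.covBy_iff_add_one_eq, Fin.val_rev]
  omega

end Descents

section NonCrossing

variable {σ : Perm (Fin n)} {a b v w y : Fin n}

theorem IsNC.inv_apply_lt_of_apply_covBy (hσ : IsNC σ) (hy : σ y < y) (hv : σ y ⋖ v) :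
    σ⁻¹ v < y := by
  have hyy : σ.SameCycle (σ y) y := Perm.sameCycle_apply_left.2 (.refl σ y)
  by_cases hc : σ.SameCycle (σ y) v
  · have hnext : σ (σ y) = v :=
      (hσ.1.apply_le hc hv.lt).antisymm (hv.ge_of_gt (hσ.1.lt_apply hc hv.lt))
    rwa [← hnext, Perm.coe_inv, symm_apply_apply]
  · have hvy : v < y := (hv.ge_of_gt hy).lt_of_ne fun h => hc (h ▸ hyy)
    refine lt_of_not_ge fun hge => hσ.2 ⟨σ y, v, y, σ⁻¹ v, hv.lt, hvy, hge.lt_of_ne' ?_, hyy,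
      Perm.sameCycle_symm_apply_right.2 (.refl σ v), hc⟩
    exact fun h => hv.lt.ne' (Perm.inv_eq_iff_eq.1 h)

theorem IsNC.lt_inv_apply (hσ : IsNC σ) (hw : a < w) (hw' : w < σ a) : a < σ⁻¹ w := by
  refine lt_of_not_ge fun hle => hσ.2 ⟨σ⁻¹ w, a, w, σ a, hle.lt_of_ne ?_, hw, hw',
    Perm.sameCycle_symm_apply_left.2 (.refl σ w), Perm.sameCycle_apply_right.2 (.refl σ a), ?_⟩
  · exact fun h => hw'.ne (Perm.inv_eq_iff_eq.1 h)
  · exact fun h => (hσ.1.apply_le (Perm.sameCycle_symm_apply_left.1 h).symm hw).not_gt hw'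

theorem IsNC.not_apply_covBy_apply (hσ : IsNC σ) (hy : σ y < y) (hab : a < b) (hb : b < σ a) :
    ¬σ y ⋖ σ a := by
  intro hcov
  rcases lt_trichotomy a (σ y) with h | rfl | h
  · have hyy : σ.SameCycle y (σ y) := Perm.sameCycle_apply_right.2 (.refl σ y)
    have hnsc : ¬σ.SameCycle a (σ y) := fun h' =>
      (hσ.1.apply_le_of_apply_lt hy (hyy.trans h'.symm)).not_gt h
    have haa : σ.SameCycle a (σ a) := Perm.sameCycle_apply_right.2 (.refl σ a)
    refine hσ.2 ⟨a, σ y, σ a, y, h, hcov.lt, (hcov.ge_of_gt hy).lt_of_ne fun h' => ?_, haa,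
      hyy.symm, hnsc⟩
    exact hnsc (haa.trans (h' ▸ hyy))
  · exact hcov.2 hab hb
  · exact (hcov.ge_of_gt h).not_gt (hab.trans hb)

end NonCrossing

section Matching

variable {σ : Perm (Fin n)} {p p' q : Fin n × Fin n}

/-- A descent `x ⋖ y` of `σ` is matched with the descent of `σ⁻¹` at the values `σ y ⋖ σ y + 1`
when `y` tops its cycle, and at the values `σ x - 1 ⋖ σ x` otherwise. -/
def DescentMatch (σ : Perm (Fin n)) (p q : Fin n × Fin n) : Prop :=
  if σ p.2 < p.2 then q.1 = σ p.2 else q.2 = σ p.1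

theorem IsNC.exists_descentMatch (hσ : IsNC σ) (hp : p ∈ descentPairs σ) :
    ∃ q ∈ descentPairs σ⁻¹, DescentMatch σ p q := by
  obtain ⟨hcov, hdes⟩ := mem_descentPairs.1 hp
  unfold DescentMatch
  split_ifs with htop
  · obtain ⟨v, hv, -⟩ := exists_covBy_le_of_lt htop
    refine ⟨(σ p.2, v), mem_descentPairs.2 ⟨hv, ?_⟩, rfl⟩
    simpa using hσ.inv_apply_lt_of_apply_covBy htop hv
  · obtain ⟨u, hu, hu'⟩ := exists_le_covBy_of_lt ((not_lt.1 htop).trans_lt hdes)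
    refine ⟨(u, σ p.1), mem_descentPairs.2 ⟨hu', ?_⟩, rfl⟩
    simpa using hσ.lt_inv_apply (hcov.lt.trans_le hu) hu'.lt

theorem IsNC.eq_of_descentMatch (hσ : IsNC σ) (hp : p ∈ descentPairs σ)
    (hp' : p' ∈ descentPairs σ) (hq : q ∈ descentPairs σ⁻¹) (h : DescentMatch σ p q)
    (h' : DescentMatch σ p' q) : p = p' := by
  obtain ⟨hcov, hdes⟩ := mem_descentPairs.1 hp
  obtain ⟨hcov', hdes'⟩ := mem_descentPairs.1 hp'
  have hqcov := (mem_descentPairs.1 hq).1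
  unfold DescentMatch at h h'
  split_ifs at h h' with htop htop' htop'
  · have h2 : p.2 = p'.2 := σ.injective (h.symm.trans h')
    exact Prod.ext (hcov.unique_left (h2 ▸ hcov')) h2
  · exact absurd (h ▸ h' ▸ hqcov) <|
      hσ.not_apply_covBy_apply htop hcov'.lt ((not_lt.1 htop').trans_lt hdes')
  · exact absurd (h' ▸ h ▸ hqcov) <|
      hσ.not_apply_covBy_apply htop' hcov.lt ((not_lt.1 htop).trans_lt hdes)
  · have h1 : p.1 = p'.1 := σ.injective (h.symm.trans h')
    exact Prod.ext h1 (hcov.unique_right (h1 ▸ hcov'))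

theorem IsNC.desP_le_desP_inv (hσ : IsNC σ) : desP σ ≤ desP σ⁻¹ := by
  rw [desP_eq_card_descentPairs, desP_eq_card_descentPairs]
  exact card_le_card_of_forall_subsingleton (DescentMatch σ)
    (fun p hp => hσ.exists_descentMatch hp)
    (fun q hq p ⟨hp, h⟩ p' ⟨hp', h'⟩ => hσ.eq_of_descentMatch hp hp' hq h h')

end Matching

/-- A non-crossing permutation has as many descents as its inverse. -/
theorem desP_NC_eq_desP_inv (n : ℕ) (σ : Equiv.Perm (Fin n)) (h : IsNC σ) :
    desP σ = desP σ⁻¹ := by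
  refine le_antisymm h.desP_le_desP_inv ?_
  have h' := h.conj_revPerm_inv.desP_le_desP_inv
  rwa [mul_inv_rev, mul_inv_rev, inv_inv, inv_inv, ← mul_assoc, desP_conj_revPerm,
    desP_conj_revPerm] at h'

end Stmt
end

section
/- Let n ≥ 1, let 1 ≤ i_1 < i_2 < … < i_k ≤ n with k ≥ 2, and let σ be the permutation of {1,…,n} with σ(i_l) = i_{l+1} for 1 ≤ l < k, σ(i_k) = i_1, and σ(m) = m for all m ∉ {i_1,…,i_k}. Then Des(σ) = {i_l : 1 ≤ l < k and i_l + 1 < i_{l+1}} ∪ {i_k − 1} and Des(σ^{−1}) = {i_l − 1 : 1 < l ≤ k and i_{l−1} + 1 < i_l} ∪ {i_1}. -/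
/-!
An increasing cycle `τ` on `c 0 < ⋯ < c (k-1)` satisfies `z ≤ τ z` for every `z ≠ c (k-1)`,
and sends `c (k-1)` to `c 0`. So if `x ⋖ y` and `τ y < τ x` with `y ≠ c (k-1)`, then
`x < y ≤ τ y < τ x`: the point `x` is moved, hence `x = c l` and `τ x = c (l+1) > y`. Conversely
`y = c (k-1)` is always a descent, as `τ x ≥ x ≥ c 0 = τ y` and `τ x ≠ τ y`.

`σ⁻¹` is an increasing cycle for the reversed order, and reversing both positions and values
preserves descents, so `Des(σ⁻¹)` comes from the same statement in `(Fin n)ᵒᵈ`.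
-/

open scoped Classical

namespace Stmt

structure IsIncreasingCycle {α : Type*} [LinearOrder α] {k : ℕ} (τ : Equiv.Perm α)
    (c : Fin k → α) : Prop where
  strictMono : StrictMono c
  apply_succ : ∀ (l : ℕ) (h : l + 1 < k), τ (c ⟨l, Nat.lt_of_succ_lt h⟩) = c ⟨l + 1, h⟩
  apply_last : ∀ h : 0 < k, τ (c ⟨k - 1, Nat.sub_one_lt_of_lt h⟩) = c ⟨0, h⟩
  apply_of_notMem : ∀ z ∉ Set.range c, τ z = z

namespace IsIncreasingCycle

variable {α : Type*} [LinearOrder α] {k : ℕ} {c : Fin k → α} {τ : Equiv.Perm α}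

theorem le_apply (h : IsIncreasingCycle τ c) (hk : 0 < k) {z : α}
    (hz : z ≠ c ⟨k - 1, Nat.sub_one_lt_of_lt hk⟩) : z ≤ τ z := by
  by_cases hS : z ∈ Set.range c
  · obtain ⟨⟨l, hl⟩, rfl⟩ := hS
    have hl1 : l + 1 < k := by
      by_contra hl1
      exact hz (congrArg c (Fin.ext (by simp only; omega)))
    rw [h.apply_succ l hl1]
    exact h.strictMono.monotone (Fin.mk_le_mk.2 (Nat.le_succ l))
  · rw [h.apply_of_notMem z hS]

theorem exists_eq_of_lt_apply (h : IsIncreasingCycle τ c) {z : α} (hz : z < τ z) :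
    ∃ (l : ℕ) (hl : l + 1 < k), z = c ⟨l, Nat.lt_of_succ_lt hl⟩ := by
  obtain ⟨⟨l, hl⟩, rfl⟩ : z ∈ Set.range c := by
    by_contra hS
    exact hz.ne (h.apply_of_notMem z hS).symm
  by_cases hl1 : l + 1 < k
  · exact ⟨l, hl1, rfl⟩
  · obtain rfl : l = k - 1 := by omega
    rw [h.apply_last (by omega)] at hz
    exact absurd hz (not_lt.2 (h.strictMono.monotone (Fin.mk_le_mk.2 (Nat.zero_le _))))

theorem apply_lt_apply_iff (h : IsIncreasingCycle τ c) (hk : 1 < k) {x y : α} (hxy : x ⋖ y) :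
    τ y < τ x ↔
      (∃ (l : ℕ) (hl : l + 1 < k), x = c ⟨l, Nat.lt_of_succ_lt hl⟩ ∧ y < c ⟨l + 1, hl⟩) ∨
        y = c ⟨k - 1, Nat.sub_one_lt_of_lt hk⟩ := by
  constructor
  · intro hdes
    by_cases hy : y = c ⟨k - 1, by omega⟩
    · exact Or.inr hy
    have hyx : y < τ x := (h.le_apply (by omega) hy).trans_lt hdes
    obtain ⟨l, hl, rfl⟩ := h.exists_eq_of_lt_apply (hxy.lt.trans hyx)
    exact Or.inl ⟨l, hl, rfl, h.apply_succ l hl ▸ hyx⟩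
  · rintro (⟨l, hl, rfl, hy⟩ | rfl)
    · have hy_fixed : τ y = y := by
        refine h.apply_of_notMem y ?_
        rintro ⟨j, rfl⟩
        have hlj := h.strictMono.lt_iff_lt.1 hxy.lt
        have hjl := h.strictMono.lt_iff_lt.1 hy
        simp only [Fin.lt_def] at hlj hjl
        omega
      rwa [hy_fixed, h.apply_succ l hl]
    · have hx : x ≠ c ⟨k - 1, by omega⟩ := hxy.lt.ne
      have h0x : c ⟨0, by omega⟩ ≤ x :=
        hxy.le_of_lt (h.strictMono (Fin.mk_lt_mk.2 (by omega)))
      rw [h.apply_last (by omega)]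
      refine lt_of_le_of_ne (h0x.trans (h.le_apply (by omega) hx)) fun heq => hx ?_
      rw [← h.apply_last (by omega)] at heq
      exact (τ.injective heq).symm

theorem inv_dual (h : IsIncreasingCycle τ c) :
    IsIncreasingCycle (OrderDual.toDual.permCongr τ⁻¹) (OrderDual.toDual ∘ c ∘ Fin.rev) where
  strictMono := (h.strictMono.comp_strictAnti Fin.rev_strictAnti).dual_right
  apply_succ l hl := by
    have hrev : Fin.rev ⟨l, Nat.lt_of_succ_lt hl⟩ = ⟨k - (l + 2) + 1, by omega⟩ :=
      Fin.ext (by grind)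
    have hrev_succ : Fin.rev ⟨l + 1, hl⟩ = ⟨k - (l + 2), by omega⟩ :=
      Fin.ext (by grind)
    simp only [Equiv.permCongr_apply, Function.comp_apply, OrderDual.toDual_inj,
      OrderDual.toDual_symm_eq, OrderDual.ofDual_toDual, Equiv.Perm.inv_eq_iff_eq, hrev, hrev_succ]
    exact (h.apply_succ _ _).symm
  apply_last hk := by
    have hrev_last : Fin.rev ⟨k - 1, by omega⟩ = ⟨0, hk⟩ :=
      Fin.ext (by grind)
    have hrev_zero : Fin.rev ⟨0, hk⟩ = ⟨k - 1, by omega⟩ :=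
      Fin.ext (by grind)
    simp only [Equiv.permCongr_apply, Function.comp_apply, OrderDual.toDual_inj,
      OrderDual.toDual_symm_eq, OrderDual.ofDual_toDual, Equiv.Perm.inv_eq_iff_eq, hrev_last,
      hrev_zero]
    exact (h.apply_last hk).symm
  apply_of_notMem z hz := by
    have hz' : OrderDual.ofDual z ∉ Set.range c := by
      rintro ⟨l, hl⟩
      exact hz ⟨Fin.rev l, by simp [hl]⟩
    rw [Equiv.permCongr_apply, ← Equiv.eq_symm_apply, Equiv.Perm.inv_eq_iff_eq]
    exact (h.apply_of_notMem _ hz').symm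

theorem inv_apply_lt_inv_apply_iff (h : IsIncreasingCycle τ c) (hk : 1 < k) {x y : α}
    (hxy : x ⋖ y) :
    τ⁻¹ y < τ⁻¹ x ↔
      (∃ (l : ℕ) (hl : l + 1 < k), y = c ⟨l + 1, hl⟩ ∧ c ⟨l, Nat.lt_of_succ_lt hl⟩ < x) ∨
        x = c ⟨0, Nat.zero_lt_of_lt hk⟩ := by
  have hdual := h.inv_dual.apply_lt_apply_iff hk (toDual_covBy_toDual_iff.2 hxy)
  simp only [Equiv.permCongr_apply, Function.comp_apply, OrderDual.toDual_symm_eq,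
    OrderDual.ofDual_toDual, OrderDual.toDual_lt_toDual, OrderDual.toDual_inj] at hdual
  rw [hdual, show Fin.rev ⟨k - 1, _⟩ = ⟨0, by omega⟩ from Fin.ext (by grind)]
  -- the reversed order lists the cycle as `c (k-1), …, c 0`: reindex by `l ↦ k - 2 - l`
  refine or_congr_left ⟨?_, ?_⟩
  · rintro ⟨l, hl, rfl, hx⟩
    refine ⟨k - (l + 2), by omega, congrArg c (Fin.ext (by grind)), ?_⟩
    convert hx using 2
    exact Fin.ext (by grind)
  · rintro ⟨l, hl, rfl, hx⟩
    refine ⟨k - (l + 2), by omega, congrArg c (Fin.ext (by grind)), ?_⟩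
    convert hx using 2
    exact Fin.ext (by grind)

end IsIncreasingCycle

theorem _root_.Fin.covBy_iff_val_add_one_eq {n : ℕ} {p q : Fin n} : p ⋖ q ↔ (p : ℕ) + 1 = q :=
  Fin.covBy_iff.trans Nat.covBy_iff_add_one_eq

theorem mem_permDes_iff_exists_covBy {n : ℕ} (τ : Equiv.Perm (Fin n)) (i : ℕ) :
    i ∈ permDes τ ↔ ∃ p q : Fin n, p ⋖ q ∧ (q : ℕ) = i ∧ τ q < τ p := by
  simp only [permDes, Finset.mem_filter, Finset.mem_Ico]
  constructor
  · rintro ⟨⟨hi, -⟩, hin, hdes⟩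
    exact ⟨_, _, Fin.covBy_iff_val_add_one_eq.2 (by simp only; omega), rfl, hdes⟩
  · rintro ⟨p, q, hpq, rfl, hdes⟩
    have hpq' : (p : ℕ) + 1 = q := Fin.covBy_iff_val_add_one_eq.1 hpq
    refine ⟨⟨by omega, q.isLt⟩, q.isLt, ?_⟩
    rwa [show (⟨q - 1, by omega⟩ : Fin n) = p from Fin.ext (by simp only; omega)]

section CycleInFin

variable {n k : ℕ} {b : Fin k → Fin n} {σ : Equiv.Perm (Fin n)}

theorem mem_permDes_iff_of_isIncreasingCycle (h : IsIncreasingCycle σ b) (hk : 1 < k) (i : ℕ) :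
    i ∈ permDes σ ↔
      (∃ (l : ℕ) (hl : l + 1 < k),
          i = (b ⟨l, Nat.lt_of_succ_lt hl⟩ : ℕ) + 1 ∧
            (b ⟨l, Nat.lt_of_succ_lt hl⟩ : ℕ) + 1 < (b ⟨l + 1, hl⟩ : ℕ)) ∨
        i = (b ⟨k - 1, Nat.sub_one_lt_of_lt hk⟩ : ℕ) := by
  rw [mem_permDes_iff_exists_covBy]
  constructor
  · rintro ⟨p, q, hpq, rfl, hdes⟩
    have hpq' : (p : ℕ) + 1 = q := Fin.covBy_iff_val_add_one_eq.1 hpq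
    rcases (h.apply_lt_apply_iff hk hpq).1 hdes with ⟨l, hl, rfl, hq⟩ | rfl
    · exact Or.inl ⟨l, hl, hpq'.symm, hpq' ▸ hq⟩
    · exact Or.inr rfl
  · rintro (⟨l, hl, rfl, hgap⟩ | rfl)
    · have hq : (b ⟨l, Nat.lt_of_succ_lt hl⟩ : ℕ) + 1 < n := hgap.trans (b _).isLt
      have hpq : b ⟨l, Nat.lt_of_succ_lt hl⟩ ⋖ ⟨_, hq⟩ := Fin.covBy_iff_val_add_one_eq.2 rfl
      exact ⟨_, _, hpq, rfl, (h.apply_lt_apply_iff hk hpq).2 (Or.inl ⟨l, hl, rfl, hgap⟩)⟩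
    · have hpos : (b ⟨0, by omega⟩ : ℕ) < b ⟨k - 1, by omega⟩ :=
        h.strictMono (Fin.mk_lt_mk.2 (by omega))
      have hpq : (⟨b ⟨k - 1, by omega⟩ - 1, by omega⟩ : Fin n) ⋖ b ⟨k - 1, by omega⟩ :=
        Fin.covBy_iff_val_add_one_eq.2 (by simp only; omega)
      exact ⟨_, _, hpq, rfl, (h.apply_lt_apply_iff hk hpq).2 (Or.inr rfl)⟩

theorem mem_permDes_inv_iff_of_isIncreasingCycle (h : IsIncreasingCycle σ b) (hk : 1 < k)
    (i : ℕ) :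
    i ∈ permDes σ⁻¹ ↔
      (∃ (l : ℕ) (hl : l + 1 < k),
          i = (b ⟨l + 1, hl⟩ : ℕ) ∧
            (b ⟨l, Nat.lt_of_succ_lt hl⟩ : ℕ) + 1 < (b ⟨l + 1, hl⟩ : ℕ)) ∨
        i = (b ⟨0, Nat.zero_lt_of_lt hk⟩ : ℕ) + 1 := by
  rw [mem_permDes_iff_exists_covBy]
  constructor
  · rintro ⟨p, q, hpq, rfl, hdes⟩
    have hpq' : (p : ℕ) + 1 = q := Fin.covBy_iff_val_add_one_eq.1 hpq
    rcases (h.inv_apply_lt_inv_apply_iff hk hpq).1 hdes with ⟨l, hl, rfl, hp⟩ | rfl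
    · exact Or.inl ⟨l, hl, rfl, hpq' ▸ Nat.succ_lt_succ hp⟩
    · exact Or.inr hpq'.symm
  · rintro (⟨l, hl, rfl, hgap⟩ | rfl)
    · have hpq : (⟨b ⟨l + 1, hl⟩ - 1, by omega⟩ : Fin n) ⋖ b ⟨l + 1, hl⟩ :=
        Fin.covBy_iff_val_add_one_eq.2 (by simp only; omega)
      exact ⟨_, _, hpq, rfl, (h.inv_apply_lt_inv_apply_iff hk hpq).2
        (Or.inl ⟨l, hl, rfl, Fin.mk_lt_mk.2 (by omega)⟩)⟩
    · have hpos : b ⟨0, by omega⟩ < b ⟨k - 1, by omega⟩ :=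
        h.strictMono (Fin.mk_lt_mk.2 (by omega))
      have hq : (b ⟨0, by omega⟩ : ℕ) + 1 < n := (Nat.succ_le_of_lt hpos).trans_lt (b _).isLt
      have hpq : b ⟨0, by omega⟩ ⋖ ⟨_, hq⟩ := Fin.covBy_iff_val_add_one_eq.2 rfl
      exact ⟨_, _, hpq, rfl, (h.inv_apply_lt_inv_apply_iff hk hpq).2 (Or.inr rfl)⟩

end CycleInFin

/-- `b` is the `0`-indexed cycle, so the `1`-indexed entry `i_{l+1}` is `(b l : ℕ) + 1`. -/
theorem des_of_increasing_cycle (n k : ℕ) (hk : 2 ≤ k)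
    (b : Fin k → Fin n) (hmono : StrictMono b) (σ : Equiv.Perm (Fin n))
    (hcyc : ∀ (l : ℕ) (h : l + 1 < k),
      σ (b ⟨l, Nat.lt_of_succ_lt h⟩) = b ⟨l + 1, h⟩)
    (hlast : σ (b ⟨k - 1, by omega⟩) = b ⟨0, by omega⟩)
    (hfix : ∀ m : Fin n, (∀ l : Fin k, b l ≠ m) → σ m = m) :
    (∀ i : ℕ, i ∈ permDes σ ↔
        ((∃ (l : ℕ) (h : l + 1 < k),
            i = (b ⟨l, Nat.lt_of_succ_lt h⟩ : ℕ) + 1 ∧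
            (b ⟨l, Nat.lt_of_succ_lt h⟩ : ℕ) + 1 < (b ⟨l + 1, h⟩ : ℕ)) ∨
          i = (b ⟨k - 1, by omega⟩ : ℕ))) ∧
    (∀ i : ℕ, i ∈ permDes σ⁻¹ ↔
        ((∃ (l : ℕ) (h : l + 1 < k),
            i = (b ⟨l + 1, h⟩ : ℕ) ∧
            (b ⟨l, Nat.lt_of_succ_lt h⟩ : ℕ) + 1 < (b ⟨l + 1, h⟩ : ℕ)) ∨
          i = (b ⟨0, by omega⟩ : ℕ) + 1)) := by
  have hσ : IsIncreasingCycle σ b :=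
    ⟨hmono, hcyc, fun _ => hlast, fun m hm => hfix m fun l hl => hm ⟨l, hl⟩⟩
  exact ⟨mem_permDes_iff_of_isIncreasingCycle hσ hk,
    mem_permDes_inv_iff_of_isIncreasingCycle hσ hk⟩

end Stmt
end

section
/- For every n ≥ 1 and every integer k, the number of Dyck paths of length n with area k equals the number of 231-avoiding permutations of {1,…,n} with exactly k inversions; equivalently, Σ_{w ∈ D_n} q^{area(w)} = Σ_{σ ∈ S_n(231)} q^{inv(σ)} (where inv(σ) is the Coxeter length of σ in the symmetric group). -/
open scoped Classical

namespace Stmt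

/-- Number of north steps (`true`) among the first `k` steps of the path `w`. -/
def countN {m : ℕ} (w : Fin m → Bool) (k : ℕ) : ℕ :=
  (Finset.univ.filter (fun t : Fin m => (t : ℕ) < k ∧ w t = true)).card

/-- Number of east steps (`false`) among the first `k` steps of the path `w`. -/
def countE {m : ℕ} (w : Fin m → Bool) (k : ℕ) : ℕ :=
  (Finset.univ.filter (fun t : Fin m => (t : ℕ) < k ∧ w t = false)).card

/-- A Dyck path of length `n`: `n` north and `n` east steps, every prefix has
at least as many north as east steps. -/
def IsDyckA (n : ℕ) (w : Fin (2 * n) → Bool) : Prop :=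
  countN w (2 * n) = n ∧ ∀ k : ℕ, countE w k ≤ countN w k

/-- A Dyck path of type `B_n`: `2n` steps, every prefix has at least as many
north as east steps. -/
def IsDyckB (n : ℕ) (w : Fin (2 * n) → Bool) : Prop :=
  ∀ k : ℕ, countE w k ≤ countN w k

/-- The unit cell `[i-1,i] × [j-1,j]` lies below the lattice path `w`:
at some time the path has `x`-coordinate `< i` and `y`-coordinate `≥ j`. -/
def CellBelow {m : ℕ} (w : Fin m → Bool) (i j : ℕ) : Prop :=
  ∃ k : ℕ, countE w k < i ∧ j ≤ countN w k

/-- Area of a (type `A`) Dyck path: number of cells `b_{i,j}` with `i < j`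
lying below the path. -/
noncomputable def areaA {m : ℕ} (w : Fin m → Bool) : ℕ :=
  {p : ℕ × ℕ | 1 ≤ p.1 ∧ p.1 < p.2 ∧ CellBelow w p.1 p.2}.ncard

/-- Area of a type `B_n` Dyck path: number of cells `b_{i,j}` with
`1 ≤ i < j ≤ 2n+1-i` lying below the path. -/
noncomputable def areaB (n : ℕ) (w : Fin (2 * n) → Bool) : ℕ :=
  {p : ℕ × ℕ | 1 ≤ p.1 ∧ p.1 < p.2 ∧ p.2 ≤ 2 * n + 1 - p.1 ∧
    CellBelow w p.1 p.2}.ncard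

/-- Descent set of a path, 1-indexed: positions `i` with `w_i = E`, `w_{i+1} = N`. -/
def pathDes {m : ℕ} (w : Fin m → Bool) : Finset ℕ :=
  (Finset.Ioo 0 m).filter (fun i =>
    ∃ h : i < m, w ⟨i - 1, Nat.lt_of_le_of_lt (Nat.sub_le i 1) h⟩ = false ∧ w ⟨i, h⟩ = true)

def desPath {m : ℕ} (w : Fin m → Bool) : ℕ := (pathDes w).card

/-- Major index of a Dyck path of length `n`: `maj(w) = ∑_{i ∈ Des(w)} (2n - i)`. -/
def majA (n : ℕ) (w : Fin (2 * n) → Bool) : ℕ :=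
  ∑ i ∈ pathDes w, (2 * n - i)

/-- Number of east steps of a path. -/
def negPath {m : ℕ} (w : Fin m → Bool) : ℕ :=
  (Finset.univ.filter (fun t : Fin m => w t = false)).card

/-- Type `B` major index: `maj(w) = 2 ⬝ (neg(w) + ∑_{i ∈ Des(w)} (2n - i))`. -/
def majB (n : ℕ) (w : Fin (2 * n) → Bool) : ℕ :=
  2 * (negPath w + ∑ i ∈ pathDes w, (2 * n - i))

/-- `σ` is 231-avoiding: no `i < j < k` with `σ k < σ i < σ j`. -/
def Avoids231 {n : ℕ} (σ : Equiv.Perm (Fin n)) : Prop :=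
  ¬ ∃ i j k : Fin n, i < j ∧ j < k ∧ σ k < σ i ∧ σ i < σ j

/-!
Both sides are counted by area sequences: tuples `c` with `c j ≤ j` and `c (j + 1) ≤ c j + 1`,
weighted by `∑ j, c j`. For a Dyck path, `c j` is the number of cells between the diagonal and
the path in row `j + 1`, so the area is the sum. A permutation is built by appending entries on
the right; the entry appended at position `j` adds `c j`, the number of earlier entries larger
than it, to the inversions, and when the permutation built so far avoids 231 the extension still
does exactly when `c j ≤ c (j - 1) + 1`.
-/

open Finset Equiv

section Paths

variable {m n : ℕ}

theorem countN_add_countE (w : Fin m → Bool) (k : ℕ) : countN w k + countE w k = min k m := by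
  have := card_filter_add_card_filter_not (s := {t : Fin m | (t : ℕ) < k}) (fun t => w t = true)
  simp only [filter_filter, Bool.not_eq_true] at this
  rw [countN, countE, this, Fin.card_filter_val_lt, min_comm]

theorem countN_le_self (w : Fin m → Bool) (k : ℕ) : countN w k ≤ k :=
  (Nat.le_add_right _ _).trans ((countN_add_countE w k).trans_le (min_le_left _ _))

theorem countE_mono (w : Fin m → Bool) : Monotone (countE w) := fun _ _ hkl =>
  card_le_card <| monotone_filter_right _ fun _ _ => And.imp_left (LT.lt.trans_le · hkl)

structure IsNorthPos (w : Fin m → Bool) (p : Fin n → ℕ) : Prop where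
  strictMono : StrictMono p
  lt : ∀ j, p j < m
  eq_true_iff : ∀ t : Fin m, w t = true ↔ ∃ j, p j = t

namespace IsNorthPos

variable {w : Fin m → Bool} {p : Fin n → ℕ}

theorem countN_eq (h : IsNorthPos w p) (k : ℕ) : countN w k = #{j | p j < k} := by
  refine (card_nbij (fun j => (⟨p j, h.lt j⟩ : Fin m)) ?_ ?_ ?_).symm
  · intro j hj
    simp only [coe_filter, Set.mem_ofPred_eq, mem_univ, true_and] at hj ⊢
    exact ⟨hj, (h.eq_true_iff _).2 ⟨j, rfl⟩⟩
  · intro i _ j _ hij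
    exact h.strictMono.injective (Fin.mk.inj hij)
  · intro t ht
    simp only [coe_filter, Set.mem_ofPred_eq, mem_univ, true_and] at ht
    obtain ⟨j, hj⟩ := (h.eq_true_iff t).1 ht.2
    exact ⟨j, by simpa [hj] using ht.1, Fin.ext hj⟩

theorem countN_le (h : IsNorthPos w p) (k : ℕ) : countN w k ≤ n :=
  h.countN_eq k ▸ (card_filter_le _ _).trans_eq (card_fin n)

theorem lt_countN_iff (h : IsNorthPos w p) (j : Fin n) (k : ℕ) :
    (j : ℕ) < countN w k ↔ p j < k := by
  rw [h.countN_eq]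
  exact Tuple.lt_card_lt_iff_apply_lt_of_monotone h.strictMono.monotone

theorem countN_apply (h : IsNorthPos w p) (j : Fin n) : countN w (p j) = j := by
  rw [h.countN_eq, ← Fin.card_Iio]
  congr 1
  ext
  simp [h.strictMono.lt_iff_lt]

theorem countN_apply_add_one (h : IsNorthPos w p) (j : Fin n) : countN w (p j + 1) = j + 1 := by
  rw [h.countN_eq, ← Fin.card_Iic]
  congr 1
  ext
  simp [h.strictMono.le_iff_le]

theorem le_apply (h : IsNorthPos w p) (j : Fin n) : (j : ℕ) ≤ p j :=
  h.countN_apply j ▸ countN_le_self w (p j)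

theorem countE_apply (h : IsNorthPos w p) (j : Fin n) : countE w (p j) = p j - j := by
  have := countN_add_countE w (p j)
  rw [h.countN_apply, min_eq_left (h.lt j).le] at this
  omega

theorem countE_apply_add_one (h : IsNorthPos w p) (j : Fin n) :
    countE w (p j + 1) = p j - j := by
  have := countN_add_countE w (p j + 1)
  rw [h.countN_apply_add_one, min_eq_left (h.lt j)] at this
  omega

theorem isDyckA_iff {w : Fin (2 * n) → Bool} (h : IsNorthPos w p) :
    IsDyckA n w ↔ ∀ j, p j ≤ 2 * j := by
  refine ⟨fun hw j => ?_, fun hp => ⟨?_, fun k => ?_⟩⟩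
  · have := hw.2 (p j)
    rw [h.countE_apply, h.countN_apply] at this
    omega
  · rw [h.countN_eq, filter_true_of_mem fun j _ => h.lt j, card_univ, Fintype.card_fin]
  · have hk := countN_add_countE w k
    have hN := h.countN_le k
    rcases hN.lt_or_eq with hlt | heq
    · obtain ⟨j, hj⟩ : ∃ j : Fin n, (j : ℕ) = countN w k := ⟨⟨_, hlt⟩, rfl⟩
      have hjk := (h.lt_countN_iff j k).not.1 hj.not_lt
      have := hp j
      omega
    · omega

theorem cellBelow_iff (h : IsNorthPos w p) (i : ℕ) {l : ℕ} (hl : 1 ≤ l) :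
    CellBelow w i l ↔ ∃ j : Fin n, l = j + 1 ∧ p j - j < i := by
  constructor
  · rintro ⟨k, hE, hN⟩
    have hln := hN.trans (h.countN_le k)
    obtain ⟨j, hj⟩ : ∃ j : Fin n, (j : ℕ) = l - 1 := ⟨⟨l - 1, by omega⟩, rfl⟩
    have hjk : p j < k := (h.lt_countN_iff j k).1 (by omega)
    have := countE_mono w (show p j + 1 ≤ k from hjk)
    rw [h.countE_apply_add_one] at this
    exact ⟨j, by omega, by omega⟩
  · rintro ⟨j, rfl, hj⟩
    exact ⟨p j + 1, by rw [h.countE_apply_add_one]; exact hj, (h.countN_apply_add_one j).ge⟩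

theorem areaA_eq (h : IsNorthPos w p) : areaA w = ∑ j, (2 * j - p j) := by
  have hcells : {q : ℕ × ℕ | 1 ≤ q.1 ∧ q.1 < q.2 ∧ CellBelow w q.1 q.2} =
      ↑((univ : Finset (Fin n)).biUnion fun j => Ioc (p j - j) j ×ˢ {(j : ℕ) + 1}) := by
    ext ⟨i, l⟩
    simp only [Set.mem_ofPred_eq, coe_biUnion, coe_univ, Set.mem_univ, Set.iUnion_true,
      Set.mem_iUnion, mem_coe, mem_product, mem_Ioc, mem_singleton]
    constructor
    · rintro ⟨hi, hil, hcell⟩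
      obtain ⟨j, rfl, hj⟩ := (h.cellBelow_iff i (by omega)).1 hcell
      exact ⟨j, ⟨hj, by omega⟩, rfl⟩
    · rintro ⟨j, ⟨hj, hij⟩, rfl⟩
      exact ⟨by omega, by omega, (h.cellBelow_iff i (by omega)).2 ⟨j, rfl, hj⟩⟩
  rw [areaA, hcells, Set.ncard_coe_finset, card_biUnion]
  · refine sum_congr rfl fun j _ => ?_
    rw [card_product, Nat.card_Ioc, card_singleton, mul_one]
    have := h.le_apply j
    omega
  · intro a _ b _ hab
    refine disjoint_left.2 fun q ha hb => hab ?_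
    simp only [mem_product, mem_singleton] at ha hb
    exact Fin.ext (by omega)

theorem mem_range_iff (h : IsNorthPos w p) (x : ℕ) :
    x ∈ Set.range p ↔ ∃ hx : x < m, w ⟨x, hx⟩ = true := by
  constructor
  · rintro ⟨j, rfl⟩
    exact ⟨h.lt j, (h.eq_true_iff _).2 ⟨j, rfl⟩⟩
  · rintro ⟨hx, hw⟩
    exact (h.eq_true_iff _).1 hw

theorem unique {q : Fin n → ℕ} (hp : IsNorthPos w p) (hq : IsNorthPos w q) : p = q := by
  refine (hp.strictMono.range_inj hq.strictMono).1 (Set.ext fun x => ?_)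
  rw [hp.mem_range_iff, hq.mem_range_iff]

theorem path_unique {w' : Fin m → Bool} (h : IsNorthPos w p) (h' : IsNorthPos w' p) : w = w' :=
  funext fun t => Bool.eq_iff_iff.2 ((h.eq_true_iff t).trans (h'.eq_true_iff t).symm)

end IsNorthPos

theorem exists_isNorthPos (w : Fin m → Bool) (hn : countN w m = n) :
    ∃ p : Fin n → ℕ, IsNorthPos w p := by
  set S : Finset (Fin m) := {t | w t = true}
  have hS : #S = n := by
    rw [← hn, countN]
    congr 1
    ext t
    simp [S]
  refine ⟨fun j => S.orderEmbOfFin hS j, Fin.val_strictMono.comp (S.orderEmbOfFin hS).strictMono,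
    fun j => (S.orderEmbOfFin hS j).isLt, fun t => ?_⟩
  simp only [Fin.val_inj]
  rw [← Set.mem_range, S.range_orderEmbOfFin hS]
  simp [S]

/-- Area sequences: for a Dyck path, `c j` is the number of cells between the diagonal and the
path in row `j + 1`. -/
def IsAreaSeq (c : Fin n → ℕ) : Prop :=
  (∀ j, c j ≤ j) ∧ ∀ i j : Fin n, (j : ℕ) = i + 1 → c j ≤ c i + 1

theorem IsAreaSeq.strictMono {c : Fin n → ℕ} (hc : IsAreaSeq c) :
    StrictMono fun j : Fin n => 2 * (j : ℕ) - c j := by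
  cases n with
  | zero => exact fun i => i.elim0
  | succ n =>
    refine Fin.strictMono_iff_lt_succ.2 fun j => ?_
    have := hc.1 j.castSucc
    have := hc.2 j.castSucc j.succ (by simp)
    simp only [Fin.val_castSucc, Fin.val_succ] at *
    omega

/-- Before its `j`-th north step the path has made `j` north and `j - c j` east steps. -/
def pathOfAreaSeq (c : Fin n → ℕ) : Fin (2 * n) → Bool :=
  fun t => decide (∃ j : Fin n, 2 * (j : ℕ) - c j = t)

theorem isNorthPos_pathOfAreaSeq {c : Fin n → ℕ} (hc : IsAreaSeq c) :
    IsNorthPos (pathOfAreaSeq c) fun j : Fin n => 2 * (j : ℕ) - c j :=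
  ⟨hc.strictMono, fun j => by omega, fun t => by simp [pathOfAreaSeq]⟩

section

variable {c : Fin n → ℕ}

theorem isDyckA_pathOfAreaSeq (hc : IsAreaSeq c) : IsDyckA n (pathOfAreaSeq c) :=
  (isNorthPos_pathOfAreaSeq hc).isDyckA_iff.2 fun _ => Nat.sub_le _ _

theorem areaA_pathOfAreaSeq (hc : IsAreaSeq c) : areaA (pathOfAreaSeq c) = ∑ j, c j := by
  rw [(isNorthPos_pathOfAreaSeq hc).areaA_eq]
  refine sum_congr rfl fun j _ => ?_
  have := hc.1 j
  omega

theorem pathOfAreaSeq_injOn : Set.InjOn pathOfAreaSeq {c : Fin n → ℕ | IsAreaSeq c} := by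
  intro c hc c' hc' h
  have hpos := (isNorthPos_pathOfAreaSeq hc).unique (h ▸ isNorthPos_pathOfAreaSeq hc')
  funext j
  have := congrFun hpos j
  have := hc.1 j
  have := hc'.1 j
  omega

theorem exists_pathOfAreaSeq_eq {w : Fin (2 * n) → Bool} (hw : IsDyckA n w) :
    ∃ c, IsAreaSeq c ∧ pathOfAreaSeq c = w := by
  obtain ⟨p, hp⟩ := exists_isNorthPos w hw.1
  have hp2 := hp.isDyckA_iff.1 hw
  have hc : IsAreaSeq fun j : Fin n => 2 * (j : ℕ) - p j := by
    refine ⟨fun j => ?_, fun i j hij => ?_⟩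
    · have := hp.le_apply j
      dsimp only
      omega
    · have := hp.strictMono (Fin.lt_def.2 (by omega) : i < j)
      dsimp only
      omega
  have hpc : (fun j : Fin n => 2 * (j : ℕ) - (2 * j - p j)) = p := funext fun j => by
    have := hp2 j
    omega
  have := isNorthPos_pathOfAreaSeq hc
  rw [hpc] at this
  exact ⟨_, hc, this.path_unique hp⟩

end

theorem ncard_dyckA_eq_ncard_areaSeq (n k : ℕ) :
    {w : Fin (2 * n) → Bool | IsDyckA n w ∧ areaA w = k}.ncard =
      {c : Fin n → ℕ | IsAreaSeq c ∧ ∑ j, c j = k}.ncard := by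
  have himage : pathOfAreaSeq '' {c : Fin n → ℕ | IsAreaSeq c ∧ ∑ j, c j = k} =
      {w | IsDyckA n w ∧ areaA w = k} := by
    ext w
    constructor
    · rintro ⟨c, ⟨hc, rfl⟩, rfl⟩
      exact ⟨isDyckA_pathOfAreaSeq hc, areaA_pathOfAreaSeq hc⟩
    · rintro ⟨hw, rfl⟩
      obtain ⟨c, hc, rfl⟩ := exists_pathOfAreaSeq_eq hw
      exact ⟨c, ⟨hc, (areaA_pathOfAreaSeq hc).symm⟩, rfl⟩
  rw [← himage, (pathOfAreaSeq_injOn.mono fun _ hc => hc.1).ncard_image]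

end Paths

section Permutations

variable {n : ℕ}

theorem card_filter_univ_castSucc (P : Fin (n + 1) → Prop) [DecidablePred P] :
    #{i | P i} = #{i : Fin n | P i.castSucc} + if P (Fin.last n) then 1 else 0 := by
  simp only [card_filter, Fin.sum_univ_castSucc]

theorem card_filter_le_castSucc (m : Fin (n + 1)) : #{v : Fin n | m ≤ v.castSucc} = n - m := by
  have := card_filter_add_card_filter_not (s := (univ : Finset (Fin n))) (fun v => (v : ℕ) < m)
  rw [Fin.card_filter_val_lt, card_univ, Fintype.card_fin] at this
  simp only [not_lt] at this
  simp only [Fin.le_def, Fin.val_castSucc]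
  omega

theorem invP_eq_sum (σ : Perm (Fin n)) : invP σ = ∑ j, #{i | i < j ∧ σ j < σ i} := by
  simp only [invP, card_filter, Fintype.sum_prod_type]
  exact sum_comm

/-- Appending the value `m` to `τ`: the entries of `τ` keep their relative order. -/
def snocPerm (m : Fin (n + 1)) (τ : Perm (Fin n)) : Perm (Fin (n + 1)) :=
  (finSuccEquiv' (Fin.last n)).trans ((optionCongr τ).trans (finSuccEquiv' m).symm)

section snocPerm

variable (m : Fin (n + 1)) (τ : Perm (Fin n))

@[simp]
theorem snocPerm_last : snocPerm m τ (Fin.last n) = m := by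
  simp [snocPerm]

@[simp]
theorem snocPerm_castSucc (j : Fin n) : snocPerm m τ j.castSucc = m.succAbove (τ j) := by
  simp [snocPerm, finSuccEquiv'_last_apply_castSucc, finSuccEquiv'_symm_some]

theorem exists_eq_snocPerm (σ : Perm (Fin (n + 1))) :
    ∃ τ, σ = snocPerm (σ (Fin.last n)) τ := by
  let ρ : Perm (Option (Fin n)) :=
    (finSuccEquiv' (Fin.last n)).symm.trans (σ.trans (finSuccEquiv' (σ (Fin.last n))))
  refine ⟨(Perm.decomposeOption ρ).2, ?_⟩
  ext i
  simp [snocPerm, ρ]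

theorem snocPerm_inj {m' : Fin (n + 1)} {τ' : Perm (Fin n)} :
    snocPerm m τ = snocPerm m' τ' ↔ m = m' ∧ τ = τ' := by
  refine ⟨fun h => ?_, fun h => h.1 ▸ h.2 ▸ rfl⟩
  have hm : m = m' := by simpa using congrArg (· (Fin.last n)) h
  subst hm
  refine ⟨rfl, Equiv.ext fun j => ?_⟩
  simpa using congrArg (· j.castSucc) h

theorem invP_snocPerm : invP (snocPerm m τ) = invP τ + (n - m) := by
  rw [invP_eq_sum, invP_eq_sum, Fin.sum_univ_castSucc]
  simp only [snocPerm_castSucc, snocPerm_last, card_filter_univ_castSucc,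
    Fin.castSucc_lt_castSucc_iff, Fin.succAbove_lt_succAbove_iff, (Fin.castSucc_lt_last _).not_gt,
    false_and, ↓reduceIte, add_zero, Fin.castSucc_lt_last, Fin.lt_succAbove_iff_le_castSucc,
    true_and, lt_self_iff_false, and_self, Nat.add_left_cancel_iff]
  rw [card_filter, Equiv.sum_comp τ fun v => if m ≤ v.castSucc then 1 else 0, ← card_filter,
    card_filter_le_castSucc]

theorem avoids231_snocPerm_iff_forall :
    Avoids231 (snocPerm m τ) ↔
      Avoids231 τ ∧ ∀ i j, i < j → m ≤ (τ i).castSucc → τ j ≤ τ i := by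
  simp [Avoids231, Fin.exists_fin_succ', Fin.lt_succAbove_iff_le_castSucc,
    Fin.succAbove_lt_iff_castSucc_lt, (Fin.castSucc_lt_last _).not_gt, imp_and, forall_and]

theorem avoids231_snocPerm_iff :
    Avoids231 (snocPerm m τ) ↔
      Avoids231 τ ∧ ∀ l : Fin n, (l : ℕ) + 1 = n → (τ l : ℕ) ≤ m := by
  rw [avoids231_snocPerm_iff_forall]
  refine and_congr_right fun hτ => ⟨fun h l hl => ?_, fun h i j hij him => ?_⟩
  · -- otherwise the position of the value `m` in `τ`, followed by the last position, violates `h`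
    by_contra! hlt
    let p := τ.symm ⟨m, by omega⟩
    have hp : (τ p : ℕ) = m := by simp [p]
    have hpl : p < l := by
      refine lt_of_le_of_ne (Fin.le_def.2 (by omega)) fun hpl => ?_
      rw [hpl] at hp
      omega
    have := h p l hpl (Fin.le_def.2 (by simp [hp]))
    rw [Fin.le_def] at this
    omega
  · -- the last entry of `τ` is below `τ i`, so `i`, `j` and the last position form a 231
    obtain ⟨l, hl⟩ : ∃ l : Fin n, (l : ℕ) = n - 1 := ⟨⟨n - 1, by omega⟩, rfl⟩
    have hτl := h l (by omega)
    rw [Fin.le_def, Fin.val_castSucc] at him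
    by_contra! hji
    rw [Fin.lt_def] at hij hji
    rcases Nat.lt_or_ge (j : ℕ) (n - 1) with hjl | hjl
    · have hli : τ l ≠ τ i := τ.injective.ne (Fin.ne_of_val_ne (by omega))
      have hli' := Fin.val_ne_of_ne hli
      exact hτ ⟨i, j, l, hij, Fin.lt_def.2 (by omega), Fin.lt_def.2 (by omega),
        Fin.lt_def.2 hji⟩
    · have hjl' : j = l := Fin.ext (by omega)
      rw [hjl'] at hji
      omega

end snocPerm

/-- If `c j ≤ j` for all `j`, position `j` of `ofAreaSeq c` is preceded by exactly `c j` larger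
entries. -/
def ofAreaSeq : {n : ℕ} → (Fin n → ℕ) → Perm (Fin n)
  | 0, _ => 1
  | n + 1, c => snocPerm ⟨n - c (Fin.last n), by omega⟩ (ofAreaSeq (Fin.init c))

theorem IsAreaSeq.init {c : Fin (n + 1) → ℕ} (hc : IsAreaSeq c) : IsAreaSeq (Fin.init c) :=
  ⟨fun j => hc.1 j.castSucc, fun i j hij => hc.2 i.castSucc j.castSucc hij⟩

theorem IsAreaSeq.snoc {c : Fin n → ℕ} {a : ℕ} (hc : IsAreaSeq c) (ha : a ≤ n)
    (hlast : ∀ l : Fin n, (l : ℕ) + 1 = n → a ≤ c l + 1) :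
    IsAreaSeq (Fin.snoc c a : Fin (n + 1) → ℕ) := by
  refine ⟨Fin.lastCases (by simpa using ha) fun j => by simpa using hc.1 j, fun i j hij => ?_⟩
  induction j using Fin.lastCases with
  | last =>
    induction i using Fin.lastCases with
    | last => simp at hij
    | cast i => simpa using hlast i (by simpa using hij.symm)
  | cast j =>
    induction i using Fin.lastCases with
    | last => simp only [Fin.val_castSucc, Fin.val_last] at hij; omega
    | cast i => simpa using hc.2 i j hij

theorem invP_ofAreaSeq {c : Fin n → ℕ} (hc : ∀ j, c j ≤ j) :
    invP (ofAreaSeq c) = ∑ j, c j := by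
  induction n with
  | zero => rfl
  | succ n ih =>
    rw [ofAreaSeq, invP_snocPerm, ih (c := Fin.init c) fun j => hc j.castSucc,
      Fin.sum_univ_castSucc]
    have := hc (Fin.last n)
    simp only [Fin.init, Fin.val_last] at this ⊢
    omega

theorem ofAreaSeq_apply_of_succ_eq (c : Fin n → ℕ) (l : Fin n) (hl : (l : ℕ) + 1 = n) :
    (ofAreaSeq c l : ℕ) = l - c l := by
  cases n with
  | zero => exact l.elim0
  | succ n =>
    obtain rfl : l = Fin.last n := Fin.ext (by simp only [Fin.val_last]; omega)
    simp [ofAreaSeq]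

theorem avoids231_ofAreaSeq {c : Fin n → ℕ} (hc : IsAreaSeq c) : Avoids231 (ofAreaSeq c) := by
  induction n with
  | zero => exact fun ⟨i, _⟩ => i.elim0
  | succ n ih =>
    rw [ofAreaSeq, avoids231_snocPerm_iff]
    refine ⟨ih hc.init, fun l hl => ?_⟩
    rw [ofAreaSeq_apply_of_succ_eq _ l hl]
    have := hc.1 l.castSucc
    have := hc.2 l.castSucc (Fin.last n) (by simp only [Fin.val_last, Fin.val_castSucc]; omega)
    simp only [Fin.init, Fin.val_castSucc] at *
    omega

theorem ofAreaSeq_injOn : Set.InjOn ofAreaSeq {c : Fin n → ℕ | ∀ j, c j ≤ j} := by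
  induction n with
  | zero => exact fun c _ c' _ _ => funext (·.elim0)
  | succ n ih =>
    intro c hc c' hc' h
    rw [ofAreaSeq, ofAreaSeq, snocPerm_inj] at h
    have hinit : Fin.init c = Fin.init c' :=
      ih (fun j => hc j.castSucc) (fun j => hc' j.castSucc) h.2
    have hlast : c (Fin.last n) = c' (Fin.last n) := by
      have := hc (Fin.last n)
      have := hc' (Fin.last n)
      have := Fin.val_eq_of_eq h.1
      simp only [Fin.val_last] at *
      omega
    rw [← Fin.snoc_init_self c, ← Fin.snoc_init_self c', hinit, hlast]

theorem exists_ofAreaSeq_eq {σ : Perm (Fin n)} (hσ : Avoids231 σ) :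
    ∃ c, IsAreaSeq c ∧ ofAreaSeq c = σ := by
  induction n with
  | zero => exact ⟨0, ⟨fun j => j.elim0, fun i => i.elim0⟩, Subsingleton.elim _ _⟩
  | succ n ih =>
    obtain ⟨τ, hστ⟩ := exists_eq_snocPerm σ
    rw [hστ, avoids231_snocPerm_iff] at hσ
    obtain ⟨c, hc, rfl⟩ := ih hσ.1
    have hm := Fin.is_le (σ (Fin.last n))
    refine ⟨Fin.snoc c (n - σ (Fin.last n)), hc.snoc (by omega) fun l hl => ?_, ?_⟩
    · have := hσ.2 l hl
      rw [ofAreaSeq_apply_of_succ_eq _ l hl] at this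
      omega
    · rw [ofAreaSeq, Fin.init_snoc]
      conv_rhs => rw [hστ]
      congr 1
      ext
      simp only [Fin.snoc_last]
      omega

theorem ncard_avoids231_eq_ncard_areaSeq (n k : ℕ) :
    {σ : Perm (Fin n) | Avoids231 σ ∧ invP σ = k}.ncard =
      {c : Fin n → ℕ | IsAreaSeq c ∧ ∑ j, c j = k}.ncard := by
  have himage : ofAreaSeq '' {c : Fin n → ℕ | IsAreaSeq c ∧ ∑ j, c j = k} =
      {σ | Avoids231 σ ∧ invP σ = k} := by
    ext σ
    constructor
    · rintro ⟨c, ⟨hc, rfl⟩, rfl⟩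
      exact ⟨avoids231_ofAreaSeq hc, invP_ofAreaSeq hc.1⟩
    · rintro ⟨hσ, rfl⟩
      obtain ⟨c, hc, rfl⟩ := exists_ofAreaSeq_eq hσ
      exact ⟨c, ⟨hc, (invP_ofAreaSeq hc.1).symm⟩, rfl⟩
  rw [← himage, (ofAreaSeq_injOn.mono fun _ hc => hc.1.1).ncard_image]

end Permutations

theorem area_eq_inv_231_general (n : ℕ) (k : ℕ) :
    {w : Fin (2 * n) → Bool | IsDyckA n w ∧ areaA w = k}.ncard =
      {σ : Equiv.Perm (Fin n) | Avoids231 σ ∧ invP σ = k}.ncard := by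
  rw [ncard_dyckA_eq_ncard_areaSeq, ncard_avoids231_eq_ncard_areaSeq]

/-- For every `n ≥ 1` and every `k`, Dyck paths of length `n` with area `k` are
equinumerous with 231-avoiding permutations of `{1,…,n}` with `k` inversions. -/
theorem area_eq_inv_231 (n : ℕ) (hn : 1 ≤ n) (k : ℕ) :
    {w : Fin (2 * n) → Bool | IsDyckA n w ∧ areaA w = k}.ncard =
      {σ : Equiv.Perm (Fin n) | Avoids231 σ ∧ invP σ = k}.ncard :=
  area_eq_inv_231_general n k

end Stmt
end
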